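/- For k ≥ 0 and n > 0, the k-fold composition P_{ca}^k ∘ P_{ba}^k applied to the triple (ac, ba, (c a b a)^{n-1} c a b) yields the triple (a^{k+1} c, a^k b a, (a^k c a^{k+1} b a)^{n-1} a^k c a^{k+1} b). -/
import Mathlib


inductive Letter | a | b | c
deriving DecidableEq, Repr

open Letter

/-- Apply a letter substitution to a word. -/
def subApply (r : Letter → List Letter) (w : List Letter) : List Letter := w.flatMap r

/-- The elementary transformation `P_{xy}`: `x ↦ yx`, fixing the other letters. -/
def Prule (x y : Letter) : Letter → List Letter := fun z => if z = x then [y, x] else [z]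

/-- `P_{ba}`: `b ↦ ab`. -/
def Pba : List Letter → List Letter := subApply (Prule Letter.b Letter.a)

/-- `P_{ca}`: `c ↦ ac`. -/
def Pca : List Letter → List Letter := subApply (Prule Letter.c Letter.a)

/-- The `m`-th power (repeated concatenation) of a word. -/
def wpow (w : List Letter) : ℕ → List Letter
  | 0 => []
  | m + 1 => w ++ wpow w m

/-- `a^k` etc. -/
def rep (k : ℕ) (x : Letter) : List Letter := List.replicate k x


lemma subApply_append (r : Letter → List Letter) (u v : List Letter) :
    subApply r (u ++ v) = subApply r u ++ subApply r v := by
  simp [subApply]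

lemma iter_append (f : List Letter → List Letter)
    (hf : ∀ u v, f (u ++ v) = f u ++ f v) (k : ℕ) (u v : List Letter) :
    f^[k] (u ++ v) = f^[k] u ++ f^[k] v := by
  induction k generalizing u v with
  | zero => rfl
  | succ m ih => simp [Function.iterate_succ_apply, hf, ih]

lemma iter_wpow (f : List Letter → List Letter)
    (hf : ∀ u v, f (u ++ v) = f u ++ f v) (hnil : f [] = [])
    (k m : ℕ) (w : List Letter) :
    f^[k] (wpow w m) = wpow (f^[k] w) m := by
  induction m with
  | zero => simpa [wpow] using Function.iterate_fixed hnil k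
  | succ m ih => simp [wpow, iter_append f hf, ih]

lemma Pba_append (u v : List Letter) : Pba (u ++ v) = Pba u ++ Pba v :=
  subApply_append _ u v

lemma Pca_append (u v : List Letter) : Pca (u ++ v) = Pca u ++ Pca v :=
  subApply_append _ u v

lemma Pba_iter_a (k : ℕ) : Pba^[k] [a] = [a] :=
  Function.iterate_fixed (by decide) k

lemma Pba_iter_c (k : ℕ) : Pba^[k] [c] = [c] :=
  Function.iterate_fixed (by decide) k

lemma Pca_iter_a (k : ℕ) : Pca^[k] [a] = [a] :=
  Function.iterate_fixed (by decide) k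

lemma Pca_iter_b (k : ℕ) : Pca^[k] [b] = [b] :=
  Function.iterate_fixed (by decide) k

lemma Pba_iter_b (k : ℕ) : Pba^[k] [b] = rep k a ++ [b] := by
  induction k with
  | zero => rfl
  | succ m ih =>
    have : Pba [b] = [a] ++ [b] := by decide
    rw [Function.iterate_succ_apply, this, iter_append Pba Pba_append, Pba_iter_a, ih]
    simp [rep, List.replicate_succ]

lemma Pca_iter_c (k : ℕ) : Pca^[k] [c] = rep k a ++ [c] := by
  induction k with
  | zero => rfl
  | succ m ih =>
    have : Pca [c] = [a] ++ [c] := by decide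
    rw [Function.iterate_succ_apply, this, iter_append Pca Pca_append, Pca_iter_a, ih]
    simp [rep, List.replicate_succ]

lemma Pca_iter_rep (k m : ℕ) : Pca^[k] (rep m a) = rep m a := by
  induction m with
  | zero => simpa using Function.iterate_fixed (f := Pca) rfl k
  | succ j ih =>
    have : rep (j+1) a = [a] ++ rep j a := by simp [rep, List.replicate_succ]
    rw [this, iter_append Pca Pca_append, Pca_iter_a, ih]

theorem stmt19 (k n : ℕ) (hn : 0 < n) :
    (Pca^[k] (Pba^[k] [a, c]),
     Pca^[k] (Pba^[k] [b, a]),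
     Pca^[k] (Pba^[k] (wpow [c, a, b, a] (n - 1) ++ [c, a, b]))) =
    (rep (k + 1) a ++ [c],
     rep k a ++ [b, a],
     wpow (rep k a ++ [c] ++ rep (k + 1) a ++ [b, a]) (n - 1) ++
       rep k a ++ [c] ++ rep (k + 1) a ++ [b]) := by
  have hb : ∀ j, Pba^[j] [c,a,b,a] = ([c] ++ [a] ++ (rep j a ++ [b])) ++ [a] := by
    intro j
    have : ([c,a,b,a] : List Letter) = ([c] ++ [a] ++ [b]) ++ [a] := by decide
    rw [this, iter_append Pba Pba_append, iter_append Pba Pba_append,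
        iter_append Pba Pba_append, Pba_iter_a, Pba_iter_b, Pba_iter_c]
  have hb2 : Pba^[k] [c,a,b] = [c] ++ [a] ++ (rep k a ++ [b]) := by
    have : ([c,a,b] : List Letter) = [c] ++ [a] ++ [b] := by decide
    rw [this, iter_append Pba Pba_append, iter_append Pba Pba_append,
        Pba_iter_a, Pba_iter_b, Pba_iter_c]
  have hc : Pca^[k] (([c] ++ [a] ++ (rep k a ++ [b])) ++ [a])
      = rep k a ++ [c] ++ rep (k+1) a ++ [b,a] := by
    simp only [iter_append Pca Pca_append, Pca_iter_a, Pca_iter_b, Pca_iter_c,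
      Pca_iter_rep]
    simp [rep, List.replicate_succ]
  have hc2 : Pca^[k] ([c] ++ [a] ++ (rep k a ++ [b]))
      = rep k a ++ [c] ++ rep (k+1) a ++ [b] := by
    simp only [iter_append Pca Pca_append, Pca_iter_a, Pca_iter_b, Pca_iter_c,
      Pca_iter_rep]
    simp [rep, List.replicate_succ]
  refine Prod.ext ?_ (Prod.ext ?_ ?_)
  · show Pca^[k] (Pba^[k] ([a] ++ [c])) = rep (k+1) a ++ [c]
    rw [iter_append Pba Pba_append, Pba_iter_a, Pba_iter_c,
        iter_append Pca Pca_append, Pca_iter_a, Pca_iter_c]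
    simp [rep, List.replicate_succ]
  · show Pca^[k] (Pba^[k] ([b] ++ [a])) = rep k a ++ [b,a]
    rw [iter_append Pba Pba_append, Pba_iter_a, Pba_iter_b,
        iter_append Pca Pca_append, Pca_iter_a, iter_append Pca Pca_append,
        Pca_iter_rep, Pca_iter_b]
    simp
  · show _ = _
    rw [iter_append Pba Pba_append, iter_wpow Pba Pba_append rfl, hb, hb2,
        iter_append Pca Pca_append, iter_wpow Pca Pca_append rfl, hc, hc2]
    simp
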